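/- Let n ≥ 2, let c : Fin n → ℝ, and let s be a permutation of Fin n with c_{s_1} ≤ c_{s_2} ≤ ⋯ ≤ c_{s_n}. Let y : Fin n → ℝ satisfy y_i ≥ 0 for all i and Σ_i y_i ≤ 1, set λ = 1 − Σ_i y_i, and let 0 ≤ ε < 2. Suppose y* is an optimal solution of the modified gradient redirection problem with y*_{s_1} = 0. Consider the subproblem on the index set S = {i : Fin n // i ≠ s_1} with value vector c restricted to S, base vector y restricted to S, and slack λ' = λ + y_{s_1} = 1 − Σ_{i ∈ S} y_i: maximize Σ_{i ∈ S} c_i w_i over w : S → ℝ with w_i ≥ 0, Σ_{i ∈ S} w_i = 1, and Σ_{i ∈ S} |w_i − y_i| + λ' ≤ ε. Then the restriction of y* to S is an optimal solution of this subproblem. -/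
import Mathlib

lemma sum_split_ne {n : ℕ} (a : Fin n) (f : Fin n → ℝ) :
    ∑ i, f i = f a + ∑ i : {i : Fin n // i ≠ a}, f i.1 := by
  rw [Fintype.sum_eq_add_sum_compl a]
  congr 1
  refine (Finset.sum_subtype (p := fun i => i ≠ a) ({a}ᶜ) (fun x => ?_) f)
  simp

/-- **Lemma 2 (Optimal Substructure).** If `y*` is an optimal solution of the
modified gradient redirection problem with `y*_{s₁} = 0`, then the restriction
of `y*` to the index set `S = {i // i ≠ s₁}` is an optimal solution of the
subproblem on `S` with base vector `y` restricted to `S` and slack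
`λ' = 1 - ∑_{i ∈ S} y i`. -/
theorem optimal_substructure
    (n : ℕ) (hn : 2 ≤ n) (c : Fin n → ℝ)
    (s : Equiv.Perm (Fin n))
    (hs : Monotone (fun t => c (s t)))
    (y : Fin n → ℝ) (hy0 : ∀ i, 0 ≤ y i) (hy1 : ∑ i, y i ≤ 1)
    (ε : ℝ) (hε0 : 0 ≤ ε) (hε2 : ε < 2)
    (ystar : Fin n → ℝ)
    (hfeas : (∀ i, 0 ≤ ystar i) ∧ (∑ i, ystar i = 1) ∧
      (∑ i, |ystar i - y i|) + (1 - ∑ i, y i) ≤ ε)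
    (hopt : ∀ w : Fin n → ℝ, (∀ i, 0 ≤ w i) → (∑ i, w i = 1) →
      (∑ i, |w i - y i|) + (1 - ∑ i, y i) ≤ ε →
      ∑ i, c i * w i ≤ ∑ i, c i * ystar i)
    (hzero : ystar (s ⟨0, by omega⟩) = 0) :
    ((∀ i : {i : Fin n // i ≠ s ⟨0, by omega⟩}, 0 ≤ ystar i.1) ∧
      (∑ i : {i : Fin n // i ≠ s ⟨0, by omega⟩}, ystar i.1 = 1) ∧
      (∑ i : {i : Fin n // i ≠ s ⟨0, by omega⟩}, |ystar i.1 - y i.1|) +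
        (1 - ∑ i : {i : Fin n // i ≠ s ⟨0, by omega⟩}, y i.1) ≤ ε) ∧
    (∀ w : {i : Fin n // i ≠ s ⟨0, by omega⟩} → ℝ,
      (∀ i, 0 ≤ w i) → (∑ i, w i = 1) →
      (∑ i, |w i - y i.1|) +
        (1 - ∑ i : {i : Fin n // i ≠ s ⟨0, by omega⟩}, y i.1) ≤ ε →
      ∑ i, c i.1 * w i ≤
        ∑ i : {i : Fin n // i ≠ s ⟨0, by omega⟩}, c i.1 * ystar i.1) := by
  obtain ⟨h0, h1, h2⟩ := hfeas
  set a : Fin n := s ⟨0, by omega⟩ with ha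
  have hya : |ystar a - y a| = y a := by
    rw [hzero, zero_sub, abs_neg, abs_of_nonneg (hy0 a)]
  have hsy : ∑ i, ystar i = ystar a + ∑ i : {i : Fin n // i ≠ a}, ystar i.1 :=
    sum_split_ne a ystar
  have hyy : ∑ i, y i = y a + ∑ i : {i : Fin n // i ≠ a}, y i.1 :=
    sum_split_ne a y
  have habs : ∑ i, |ystar i - y i| =
      |ystar a - y a| + ∑ i : {i : Fin n // i ≠ a}, |ystar i.1 - y i.1| :=
    sum_split_ne a _
  refine ⟨⟨fun i => h0 i.1, by rw [hsy, hzero] at h1; linarith,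
      by rw [habs, hya, hyy] at h2; linarith⟩, ?_⟩
  intro w hw0 hw1 hwc
  set w' : Fin n → ℝ := fun i => if h : i ≠ a then w ⟨i, h⟩ else 0 with hw'
  have hw'a : w' a = 0 := by simp [hw']
  have hw'i : ∀ i : {i : Fin n // i ≠ a}, w' i.1 = w i := by
    intro i; simp [hw', i.2]
  have hw'nn : ∀ i, 0 ≤ w' i := by
    intro i
    by_cases h : i = a
    · simp [hw', h]
    · simpa [hw', h] using hw0 ⟨i, h⟩
  have key := hopt w' hw'nn
    (by rw [sum_split_ne a w', hw'a]
        rw [Finset.sum_congr rfl (fun i _ => hw'i i)]; linarith)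
    (by rw [sum_split_ne a (fun i => |w' i - y i|), hw'a, hyy]
        have : |(0 : ℝ) - y a| = y a := by rw [zero_sub, abs_neg, abs_of_nonneg (hy0 a)]
        rw [this]
        rw [Finset.sum_congr rfl (fun i _ => by rw [hw'i i])]
        linarith)
  rw [sum_split_ne a (fun i => c i * w' i), hw'a,
      sum_split_ne a (fun i => c i * ystar i), hzero] at key
  rw [Finset.sum_congr rfl (fun i _ => by rw [hw'i i])] at key
  linarith
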